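/- arXiv:1505.04222 — 4 statements merged into one kernel-verified Lean document; each statement's English description precedes it below -/
import Mathlib

section
/- Let k be a field, assume C is symmetric (simply-laced type), and let α = Σ_{i∈I} a_i α_i ∈ Q⁺ with ht(α) = n and a_{i_1} > 0. Then the element z = Σ_{w ∈ S^i} (x_{w(1)} + ⋯ + x_{w(a_{i_1})}) 1_{w·i} ∈ H_{α,k} does not depend on the choice of the coset representatives S^i, and z is a central element of H_{α,k} which is homogeneous of degree 2. -/
open scoped BigOperators

namespace KLR

/-- A Cartan datum of finite type: a finite index set `I`, a Cartan matrix `c` of finite type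
(encoded by positive definiteness of the symmetrized matrix), symmetrizers `d`, and a choice
of signs `eps` with `eps i j * eps j i = -1` whenever `c i j < 0`. -/
structure CartanDatum (I : Type) [Fintype I] [DecidableEq I] where
  c : I → I → ℤ
  d : I → ℤ
  eps : I → I → ℤ
  c_diag : ∀ i, c i i = 2
  c_offdiag : ∀ i j, i ≠ j → c i j ≤ 0
  c_zero_iff : ∀ i j, c i j = 0 → c j i = 0
  d_pos : ∀ i, 0 < d i
  symm : ∀ i j, d i * c i j = d j * c j i
  finiteType : ∀ v : I → ℚ, v ≠ 0 → 0 < ∑ i, ∑ j, v i * ((d i * c i j : ℤ) : ℚ) * v j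
  eps_sign : ∀ i j, c i j < 0 → eps i j = 1 ∨ eps i j = -1
  eps_skew : ∀ i j, c i j < 0 → eps i j * eps j i = -1

variable {I : Type} [Fintype I] [DecidableEq I]

/-- The height of `α ∈ Q⁺`, where `α : I → ℕ` records the coefficients on the simple roots. -/
def ht (α : I → ℕ) : ℕ := ∑ i, α i

/-- Membership in `I^α`: the word `f` has exactly `α i` letters equal to `i`, for each `i`. -/
def InIalpha (α : I → ℕ) {n : ℕ} (f : Fin n → I) : Prop :=
  ∀ i : I, (Finset.univ.filter fun r => f r = i).card = α i

instance (α : I → ℕ) {n : ℕ} (f : Fin n → I) : Decidable (InIalpha α f) := by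
  unfold InIalpha; infer_instance

/-- Generators of the KLR algebra: idempotents `e f`, polynomial generators `x r`,
and "intertwiners" `t r` (the generator `t r` is set to `0` unless `r + 1 < n`). -/
inductive Gen (I : Type) (n : ℕ) : Type
  | e : (Fin n → I) → Gen I n
  | x : Fin n → Gen I n
  | t : Fin n → Gen I n

variable (k : Type) [CommRing k]

/-- `e f` as an element of the free algebra. -/
def Ee {n : ℕ} (f : Fin n → I) : FreeAlgebra k (Gen I n) := FreeAlgebra.ι k (Gen.e f)

/-- `x r` as an element of the free algebra. -/
def Xx {n : ℕ} (r : Fin n) : FreeAlgebra k (Gen I n) := FreeAlgebra.ι k (Gen.x r)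

/-- `t r` as an element of the free algebra. -/
def Tt {n : ℕ} (r : Fin n) : FreeAlgebra k (Gen I n) := FreeAlgebra.ι k (Gen.t r)

/-- `r + 1` as an element of `Fin n`. -/
def nxt {n : ℕ} (r : Fin n) (h : r.val + 1 < n) : Fin n := ⟨r.val + 1, h⟩

/-- The defining relations of the KLR algebra `H_α` over `k`.
(`Rel a b` means that `a = b` is imposed in the quotient.) -/
inductive Rel (D : CartanDatum I) (α : I → ℕ) (n : ℕ) :
    FreeAlgebra k (Gen I n) → FreeAlgebra k (Gen I n) → Prop
  | xx (r s : Fin n) : Rel D α n (Xx k r * Xx k s) (Xx k s * Xx k r)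
  | ee (f g : Fin n → I) :
      Rel D α n (Ee k f * Ee k g) (if f = g then Ee k f else 0)
  | esum : Rel D α n (∑ f : Fin n → I, Ee k f) 1
  | ekill (f : Fin n → I) (h : ¬ InIalpha α f) : Rel D α n (Ee k f) 0
  | xe (r : Fin n) (f : Fin n → I) : Rel D α n (Xx k r * Ee k f) (Ee k f * Xx k r)
  | te (r : Fin n) (h : r.val + 1 < n) (f : Fin n → I) :
      Rel D α n (Tt k r * Ee k f) (Ee k (f ∘ Equiv.swap r (nxt r h)) * Tt k r)
  | tkill (r : Fin n) (h : ¬ r.val + 1 < n) : Rel D α n (Tt k r) 0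
  | xte (s r : Fin n) (h : r.val + 1 < n) (f : Fin n → I) :
      Rel D α n (Xx k s * Tt k r * Ee k f - Tt k r * Xx k (Equiv.swap r (nxt r h) s) * Ee k f)
        (if f r = f (nxt r h) then
          ((if s = nxt r h then (1 : FreeAlgebra k (Gen I n)) else 0) -
            (if s = r then 1 else 0)) * Ee k f
         else 0)
  | tte (r : Fin n) (h : r.val + 1 < n) (f : Fin n → I) :
      Rel D α n (Tt k r * Tt k r * Ee k f)
        (if f r = f (nxt r h) then 0
         else if D.c (f r) (f (nxt r h)) < 0 then
           D.eps (f r) (f (nxt r h)) •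
             ((Xx k r ^ (-(D.c (f r) (f (nxt r h)))).toNat -
               Xx k (nxt r h) ^ (-(D.c (f (nxt r h)) (f r))).toNat) * Ee k f)
         else Ee k f)
  | ttfar (r s : Fin n) (h : r.val + 1 < s.val ∨ s.val + 1 < r.val) :
      Rel D α n (Tt k r * Tt k s) (Tt k s * Tt k r)
  | braid (r : Fin n) (h : r.val + 2 < n) (f : Fin n → I) :
      Rel D α n
        (Tt k (nxt r (by omega)) * Tt k r * Tt k (nxt r (by omega)) * Ee k f -
          Tt k r * Tt k (nxt r (by omega)) * Tt k r * Ee k f)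
        (if D.c (f r) (f (nxt r (by omega))) < 0 ∧ f r = f ⟨r.val + 2, h⟩ then
          D.eps (f r) (f (nxt r (by omega))) •
            ((∑ a ∈ Finset.range ((-1 - D.c (f r) (f (nxt r (by omega)))).toNat + 1),
              Xx k r ^ a *
                Xx k (⟨r.val + 2, h⟩ : Fin n) ^
                  ((-1 - D.c (f r) (f (nxt r (by omega)))).toNat - a)) * Ee k f)
         else 0)

/-- The KLR algebra `H_α` over `k`, defined by generators and relations. -/
abbrev H (D : CartanDatum I) (α : I → ℕ) : Type :=
  RingQuot (Rel k D α (ht α))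

variable (D : CartanDatum I) (α : I → ℕ)

/-- The idempotent `1_f ∈ H_α` for `f ∈ I^α`. -/
noncomputable def E (f : Fin (ht α) → I) : H k D α :=
  RingQuot.mkAlgHom k (Rel k D α (ht α)) (Ee k f)

/-- The generator `x_r ∈ H_α`. -/
noncomputable def X (r : Fin (ht α)) : H k D α :=
  RingQuot.mkAlgHom k (Rel k D α (ht α)) (Xx k r)

/-- The generator `τ_r ∈ H_α`. -/
noncomputable def T (r : Fin (ht α)) : H k D α :=
  RingQuot.mkAlgHom k (Rel k D α (ht α)) (Tt k r)

/-- The monomial `x_1^{a 1} ⋯ x_n^{a n} ∈ H_α`. -/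
noncomputable def XA (a : Fin (ht α) → ℕ) : H k D α :=
  (List.ofFn fun r => X k D α r ^ a r).prod

/-- The product `τ_{r_1} ⋯ τ_{r_l} ∈ H_α` associated to a word `L = [r_1, …, r_l]`. -/
noncomputable def tauWord (L : List (Fin (ht α))) : H k D α :=
  (L.map (T k D α)).prod

/-- The permutation `s_{r_1} ⋯ s_{r_l}` associated to a word. -/
def wordPerm {n : ℕ} (L : List (Fin n)) : Equiv.Perm (Fin n) :=
  (L.map fun r => if h : r.val + 1 < n then Equiv.swap r (nxt r h) else 1).prod

/-- A word is valid if all its letters index simple transpositions. -/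
def ValidWord {n : ℕ} (L : List (Fin n)) : Prop := ∀ r ∈ L, r.val + 1 < n

/-- `L` is a reduced expression for the permutation `w`. -/
def IsReducedWordFor {n : ℕ} (L : List (Fin n)) (w : Equiv.Perm (Fin n)) : Prop :=
  ValidWord L ∧ wordPerm L = w ∧
    ∀ L' : List (Fin n), ValidWord L' → wordPerm L' = w → L.length ≤ L'.length

end KLR

namespace KLR

variable {I : Type} [Fintype I] [DecidableEq I]

/-- Letters for words in the generators `x_r`, `τ_r` of the KLR algebra. -/
inductive XT (n : ℕ) : Type
  | x : Fin n → XT n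
  | t : Fin n → XT n

/-- The permutation by which a generator permutes the weight idempotents. -/
def xtPerm {n : ℕ} : XT n → Equiv.Perm (Fin n)
  | .x _ => 1
  | .t r => if h : r.val + 1 < n then Equiv.swap r (nxt r h) else 1

/-- The degree of a generator at the weight `f`:
`deg (x_r 1_f) = 2 d_{f r}` and `deg (τ_r 1_f) = - d_{f r} c_{f r, f (r+1)}`. -/
def xtDeg (D : CartanDatum I) {n : ℕ} : XT n → (Fin n → I) → ℤ
  | .x r, f => 2 * D.d (f r)
  | .t r, f => if h : r.val + 1 < n then -(D.d (f r) * D.c (f r) (f (nxt r h))) else 0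

/-- The product of the permutations of the letters of a word, in the order in which the
weight `f` gets pushed through the word from the right. -/
def wordPermXT {n : ℕ} (L : List (XT n)) : Equiv.Perm (Fin n) :=
  (L.reverse.map xtPerm).prod

/-- The degree of the homogeneous element `g_1 ⋯ g_m 1_f` of the KLR algebra, where each
letter sees the weight obtained by pushing `1_f` through the letters to its right. -/
def wdeg (D : CartanDatum I) {n : ℕ} : List (XT n) → (Fin n → I) → ℤ
  | [], _ => 0
  | g :: L, f => xtDeg D g (f ∘ ⇑(wordPermXT L)) + wdeg D L f

variable (k : Type) [CommRing k]

/-- A letter, as an element of the KLR algebra. -/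
noncomputable def xtElt (D : CartanDatum I) (α : I → ℕ) : XT (ht α) → H k D α
  | .x r => X k D α r
  | .t r => T k D α r

/-- The degree-`d` homogeneous component of the KLR algebra `H_α`: the `k`-span of the
homogeneous spanning elements `g_1 ⋯ g_m 1_f` of degree `d`. -/
noncomputable def degComponent (D : CartanDatum I) (α : I → ℕ) (d : ℤ) :
    Submodule k (H k D α) :=
  Submodule.span k
    {h : H k D α | ∃ (L : List (XT (ht α))) (f : Fin (ht α) → I),
      wdeg D L f = d ∧ h = (L.map (xtElt k D α)).prod * E k D α f}

/-- `T` is a system of representatives for the left cosets `S_n / S_f`, where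
`S_f` is the stabilizer of the weight `f` for the place-permutation action. -/
def IsRepSystem {n : ℕ} (f : Fin n → I) (T : Finset (Equiv.Perm (Fin n))) : Prop :=
  ∀ w : Equiv.Perm (Fin n), ∃! w', w' ∈ T ∧ ∀ r, f ((w⁻¹ * w') r) = f r

/-- The element `z = Σ_{w ∈ T} (x_{w(1)} + ⋯ + x_{w(a)}) 1_{w · f} ∈ H_α`, where `a = α i⋆`
and `f = i⋆^{a} ⋯` starts with the block of all letters equal to `i⋆`. -/
noncomputable def zElt (D : CartanDatum I) (α : I → ℕ) (istar : I)
    (f : Fin (ht α) → I) (T : Finset (Equiv.Perm (Fin (ht α)))) : H k D α :=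
  ∑ w ∈ T,
    (∑ r ∈ Finset.univ.filter (fun r : Fin (ht α) => r.val < α istar), X k D α (w r)) *
      E k D α (f ∘ ⇑w⁻¹)

end KLR

/-!
Summed over all weights `g`, `z = Σ_g (Σ_{u : g u = i⋆} x_u) 1_g`: the representative `w`
contributes the weight `g = f ∘ w⁻¹`, and `w(1), …, w(a_{i⋆})` are exactly the positions where
`g` carries `i⋆`. This form no longer mentions the representatives, and it visibly commutes with
every `1_h` and `x_s`. Against `τ_s`, the relation `τ_s x_u 1_g = x_{s(u)} τ_s 1_g ∓ 1_g` has a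
correction term only for `u ∈ {s, s+1}` and `g s = g (s+1)`; then `s` and `s+1` both carry `i⋆`
or neither does, so the two corrections cancel. Each summand `x_u 1_g` has degree `2 d_{i⋆} = 2`.
-/

namespace KLR

section Relations

variable {I : Type} [Fintype I] [DecidableEq I] (k : Type) [CommRing k]
  (D : CartanDatum I) (α : I → ℕ)

lemma E_mul_E (g h : Fin (ht α) → I) :
    E k D α g * E k D α h = if g = h then E k D α g else 0 := by
  have := RingQuot.mkAlgHom_rel k (Rel.ee (k := k) (D := D) (α := α) g h)
  rwa [map_mul, apply_ite (RingQuot.mkAlgHom k _), map_zero] at this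

lemma E_eq_zero {g : Fin (ht α) → I} (hg : ¬ InIalpha α g) : E k D α g = 0 := by
  have := RingQuot.mkAlgHom_rel k (Rel.ekill (k := k) (D := D) g hg)
  rwa [map_zero] at this

lemma X_mul_E (r : Fin (ht α)) (g : Fin (ht α) → I) :
    X k D α r * E k D α g = E k D α g * X k D α r := by
  have := RingQuot.mkAlgHom_rel k (Rel.xe (k := k) (D := D) (α := α) r g)
  rwa [map_mul, map_mul] at this

lemma X_mul_X (r s : Fin (ht α)) : X k D α r * X k D α s = X k D α s * X k D α r := by
  have := RingQuot.mkAlgHom_rel k (Rel.xx (k := k) (D := D) (α := α) r s)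
  rwa [map_mul, map_mul] at this

lemma T_eq_zero {s : Fin (ht α)} (hs : ¬ s.val + 1 < ht α) : T k D α s = 0 := by
  have := RingQuot.mkAlgHom_rel k (Rel.tkill (k := k) (D := D) (α := α) s hs)
  rwa [map_zero] at this

lemma T_mul_E {s : Fin (ht α)} (hs : s.val + 1 < ht α) (g : Fin (ht α) → I) :
    T k D α s * E k D α g = E k D α (g ∘ ⇑(Equiv.swap s (nxt s hs))) * T k D α s := by
  have := RingQuot.mkAlgHom_rel k (Rel.te (k := k) (D := D) (α := α) s hs g)
  rwa [map_mul, map_mul] at this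

lemma E_mul_T {s : Fin (ht α)} (hs : s.val + 1 < ht α) (g : Fin (ht α) → I) :
    E k D α g * T k D α s = T k D α s * E k D α (g ∘ ⇑(Equiv.swap s (nxt s hs))) := by
  rw [T_mul_E k D α hs, Function.comp_assoc, ← Equiv.coe_trans, Equiv.swap_swap,
    Equiv.coe_refl, Function.comp_id]

lemma T_mul_X_mul_E {s : Fin (ht α)} (hs : s.val + 1 < ht α) (u : Fin (ht α))
    (g : Fin (ht α) → I) :
    T k D α s * X k D α u * E k D α g =
      X k D α (Equiv.swap s (nxt s hs) u) * T k D α s * E k D α g -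
        if g s = g (nxt s hs) then
          ((if u = s then (1 : H k D α) else 0) - if u = nxt s hs then 1 else 0) * E k D α g
        else 0 := by
  have swap_eq_nxt : Equiv.swap s (nxt s hs) u = nxt s hs ↔ u = s := by
    rw [Equiv.swap_apply_eq_iff, Equiv.swap_apply_right]
  have swap_eq_self : Equiv.swap s (nxt s hs) u = s ↔ u = nxt s hs := by
    rw [Equiv.swap_apply_eq_iff, Equiv.swap_apply_left]
  have := RingQuot.mkAlgHom_rel k
    (Rel.xte (k := k) (D := D) (α := α) (Equiv.swap s (nxt s hs) u) s hs g)
  simp only [Equiv.swap_apply_self, map_sub, map_mul, apply_ite (RingQuot.mkAlgHom k _),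
    map_zero, map_one, swap_eq_nxt, swap_eq_self] at this
  change X k D α _ * T k D α s * E k D α g - T k D α s * X k D α u * E k D α g =
    (if _ then _ * E k D α g else 0) at this
  rw [← this, sub_sub_cancel]

end Relations

lemma mem_center_of_commute_ι {R V : Type*} [CommSemiring R]
    {rel : FreeAlgebra R V → FreeAlgebra R V → Prop} {a : RingQuot rel}
    (h : ∀ v, RingQuot.mkAlgHom R rel (FreeAlgebra.ι R v) * a =
      a * RingQuot.mkAlgHom R rel (FreeAlgebra.ι R v)) :
    a ∈ Subalgebra.center R (RingQuot rel) := by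
  rw [Subalgebra.mem_center_iff]
  intro b
  obtain ⟨c, rfl⟩ := RingQuot.mkAlgHom_surjective R rel b
  induction c using FreeAlgebra.induction with
  | grade0 r => rw [AlgHom.commutes]; exact Algebra.commutes r a
  | grade1 v => exact h v
  | mul b c hb hc => rw [map_mul, mul_assoc, hc, ← mul_assoc, hb, mul_assoc]
  | add b c hb hc => rw [map_add, add_mul, mul_add, hb, hc]

section Centrality

variable {I : Type} [Fintype I] [DecidableEq I] (k : Type) [CommRing k]
  (D : CartanDatum I) (α : I → ℕ) (p : I → Prop) [DecidablePred p]

noncomputable def xSumAt (g : Fin (ht α) → I) : H k D α :=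
  ∑ u ∈ Finset.univ.filter (fun u => p (g u)), X k D α u

noncomputable def zCanon : H k D α :=
  ∑ g : Fin (ht α) → I, xSumAt k D α p g * E k D α g

lemma sum_X_perm_eq_xSumAt (g : Fin (ht α) → I) (w : Equiv.Perm (Fin (ht α))) :
    ∑ u ∈ Finset.univ.filter (fun u => p (g u)), X k D α (w u) =
      xSumAt k D α p (g ∘ ⇑w⁻¹) :=
  Finset.sum_nbij' w (w⁻¹ ·) (by simp) (by simp) (by simp) (by simp) (by simp)

lemma E_mul_xSumAt (g h : Fin (ht α) → I) :
    E k D α h * xSumAt k D α p g = xSumAt k D α p g * E k D α h := by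
  simp only [xSumAt, Finset.mul_sum, Finset.sum_mul, X_mul_E]

lemma X_mul_xSumAt (s : Fin (ht α)) (g : Fin (ht α) → I) :
    X k D α s * xSumAt k D α p g = xSumAt k D α p g * X k D α s := by
  simp only [xSumAt, Finset.mul_sum, Finset.sum_mul, X_mul_X k D α s]

lemma zCanon_mul_E (h : Fin (ht α) → I) :
    zCanon k D α p * E k D α h = xSumAt k D α p h * E k D α h := by
  simp only [zCanon, Finset.sum_mul, mul_assoc, E_mul_E, mul_ite, mul_zero,
    Finset.sum_ite_eq', Finset.mem_univ, if_true]

lemma E_mul_zCanon (h : Fin (ht α) → I) :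
    E k D α h * zCanon k D α p = xSumAt k D α p h * E k D α h := by
  simp only [zCanon, Finset.mul_sum, ← mul_assoc, E_mul_xSumAt]
  simp only [mul_assoc, E_mul_E, mul_ite, mul_zero, Finset.sum_ite_eq, Finset.mem_univ, if_true]

lemma X_mul_zCanon (s : Fin (ht α)) :
    X k D α s * zCanon k D α p = zCanon k D α p * X k D α s := by
  simp only [zCanon, Finset.mul_sum, Finset.sum_mul, ← mul_assoc, X_mul_xSumAt]
  simp only [mul_assoc, X_mul_E]

lemma T_mul_xSumAt_mul_E {s : Fin (ht α)} (hs : s.val + 1 < ht α) (g : Fin (ht α) → I) :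
    T k D α s * (xSumAt k D α p g * E k D α g) =
      xSumAt k D α p (g ∘ ⇑(Equiv.swap s (nxt s hs))) * (T k D α s * E k D α g) := by
  have corrections_cancel :
      ∑ u ∈ Finset.univ.filter (fun u => p (g u)),
        (if g s = g (nxt s hs) then
          ((if u = s then (1 : H k D α) else 0) - if u = nxt s hs then 1 else 0) * E k D α g
        else 0) = 0 := by
    split_ifs with hsame
    · simp only [sub_mul, ite_mul, one_mul, zero_mul, Finset.sum_sub_distrib,
        Finset.sum_ite_eq', Finset.mem_filter, Finset.mem_univ, true_and, hsame, sub_self]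
    · exact Finset.sum_const_zero
  rw [xSumAt, Finset.sum_mul, Finset.mul_sum]
  simp only [← mul_assoc, T_mul_X_mul_E k D α hs]
  rw [Finset.sum_sub_distrib, corrections_cancel, sub_zero]
  simp only [mul_assoc, ← Finset.sum_mul]
  rw [sum_X_perm_eq_xSumAt, Equiv.swap_inv]

lemma T_mul_zCanon (s : Fin (ht α)) :
    T k D α s * zCanon k D α p = zCanon k D α p * T k D α s := by
  by_cases hs : s.val + 1 < ht α
  · have comp_swap_involutive :
        Function.Involutive fun g : Fin (ht α) → I => g ∘ ⇑(Equiv.swap s (nxt s hs)) :=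
      fun g => by funext r; simp [Equiv.swap_apply_self]
    calc T k D α s * zCanon k D α p
        = ∑ g, xSumAt k D α p (g ∘ ⇑(Equiv.swap s (nxt s hs))) *
            (T k D α s * E k D α g) := by
          simp only [zCanon, Finset.mul_sum, T_mul_xSumAt_mul_E k D α p hs]
      _ = ∑ g, xSumAt k D α p g * (T k D α s * E k D α (g ∘ ⇑(Equiv.swap s (nxt s hs)))) :=
          Fintype.sum_bijective _ (Function.Involutive.bijective comp_swap_involutive) _ _
            fun g => by rw [show _ ∘ _ = g from comp_swap_involutive g]
      _ = zCanon k D α p * T k D α s := by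
          simp only [zCanon, Finset.sum_mul, mul_assoc, E_mul_T k D α hs]
  · rw [T_eq_zero k D α hs, zero_mul, mul_zero]

lemma zCanon_mem_center : zCanon k D α p ∈ Subalgebra.center k (H k D α) :=
  mem_center_of_commute_ι fun
    | .e g => (E_mul_zCanon k D α p g).trans (zCanon_mul_E k D α p g).symm
    | .x r => X_mul_zCanon k D α p r
    | .t r => T_mul_zCanon k D α p r

end Centrality

section Weights

variable {I : Type} [DecidableEq I] {α : I → ℕ} {n : ℕ} {f : Fin n → I}

lemma InIalpha.comp_perm (hf : InIalpha α f) (w : Equiv.Perm (Fin n)) :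
    InIalpha α (f ∘ ⇑w) := fun i => by
  rw [← hf i]
  exact Finset.card_bij' (fun r _ => w r) (fun r _ => w⁻¹ r) (by simp) (by simp) (by simp)
    (by simp)

lemma InIalpha.exists_perm {g : Fin n → I} (hf : InIalpha α f) (hg : InIalpha α g) :
    ∃ w : Equiv.Perm (Fin n), f ∘ ⇑w = g := by
  have fibres_card : ∀ i, Fintype.card {r // g r = i} = Fintype.card {r // f r = i} := by
    intro i
    rw [Fintype.card_subtype, Fintype.card_subtype, hf i, hg i]
  refine ⟨(Equiv.sigmaFiberEquiv g).symm.trans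
    ((Equiv.sigmaCongrRight fun i => Fintype.equivOfCardEq (fibres_card i)).trans
      (Equiv.sigmaFiberEquiv f)), funext fun r => ?_⟩
  exact (Fintype.equivOfCardEq (fibres_card (g r)) ⟨r, rfl⟩).2

lemma IsRepSystem.sum_comp_inv [Fintype I] {M : Type*} [AddCommMonoid M]
    {T : Finset (Equiv.Perm (Fin n))} (hT : IsRepSystem f T) (hf : InIalpha α f)
    (φ : (Fin n → I) → M) :
    ∑ w ∈ T, φ (f ∘ ⇑w⁻¹) = ∑ g ∈ Finset.univ.filter (InIalpha α), φ g := by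
  refine Finset.sum_bij (fun w _ => f ∘ ⇑w⁻¹) (fun w _ => by simpa using hf.comp_perm w⁻¹)
    (fun w hw w' hw' same_weight => ?_) (fun g hg => ?_) (fun _ _ => rfl)
  · obtain ⟨u, -, rep_unique⟩ := hT w
    have w'_in_coset : ∀ r, f ((w⁻¹ * w') r) = f r := fun r => by
      simpa using congrFun same_weight (w' r)
    rw [rep_unique w ⟨hw, by simp⟩, rep_unique w' ⟨hw', w'_in_coset⟩]
  · obtain ⟨v, rfl⟩ := hf.exists_perm (by simpa using hg)
    obtain ⟨w, ⟨hw, w_in_coset⟩, -⟩ := hT v⁻¹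
    refine ⟨w, hw, funext fun r => ?_⟩
    simpa using (w_in_coset (w⁻¹ r)).symm

end Weights

section ZElement

variable {I : Type} [Fintype I] [DecidableEq I] (k : Type) [CommRing k]
  (D : CartanDatum I) (α : I → ℕ)

lemma zElt_eq_zCanon (istar : I) {f : Fin (ht α) → I} (hf : InIalpha α f)
    (hfirst : ∀ r, f r = istar ↔ r.val < α istar) {T : Finset (Equiv.Perm (Fin (ht α)))}
    (hT : IsRepSystem f T) :
    zElt k D α istar f T = zCanon k D α (· = istar) := by
  have first_block : Finset.univ.filter (fun r : Fin (ht α) => r.val < α istar) =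
      Finset.univ.filter (fun r => f r = istar) := by
    simp only [hfirst]
  have invalid_vanish : ∀ g ∈ Finset.univ, g ∉ Finset.univ.filter (InIalpha α) →
      xSumAt k D α (· = istar) g * E k D α g = 0 := fun g _ hg => by
    rw [E_eq_zero k D α (by simpa using hg), mul_zero]
  simp only [zElt, first_block, sum_X_perm_eq_xSumAt k D α (· = istar) f]
  rw [hT.sum_comp_inv hf (fun g => xSumAt k D α (· = istar) g * E k D α g), zCanon,
    Finset.sum_subset (Finset.subset_univ _) invalid_vanish]

lemma X_mul_E_mem_degComponent (r : Fin (ht α)) (g : Fin (ht α) → I) :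
    X k D α r * E k D α g ∈ degComponent k D α (2 * D.d (g r)) :=
  Submodule.subset_span ⟨[XT.x r], g, by simp [wdeg, xtDeg, wordPermXT], by simp [xtElt]⟩

lemma zElt_mem_degComponent (hd : ∀ i, D.d i = 1) (istar : I) (f : Fin (ht α) → I)
    (T : Finset (Equiv.Perm (Fin (ht α)))) :
    zElt k D α istar f T ∈ degComponent k D α 2 := by
  refine Submodule.sum_mem _ fun w _ => ?_
  rw [Finset.sum_mul]
  refine Submodule.sum_mem _ fun r _ => ?_
  simpa [hd] using X_mul_E_mem_degComponent k D α (w r) (f ∘ ⇑w⁻¹)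

end ZElement

end KLR

open KLR

theorem stmt_4_general {I : Type} [Fintype I] [DecidableEq I] (D : CartanDatum I)
    (hd : ∀ i, D.d i = 1)
    (k : Type) [Field k] (α : I → ℕ) (istar : I)
    (f : Fin (ht α) → I) (hf : InIalpha α f)
    (hfirst : ∀ r : Fin (ht α), f r = istar ↔ r.val < α istar)
    (T T' : Finset (Equiv.Perm (Fin (ht α))))
    (hT : IsRepSystem f T) (hT' : IsRepSystem f T') :
    zElt k D α istar f T = zElt k D α istar f T' ∧
      zElt k D α istar f T ∈ Subalgebra.center k (H k D α) ∧
      zElt k D α istar f T ∈ degComponent k D α 2 := by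
  have canonical := zElt_eq_zCanon k D α istar hf hfirst hT
  refine ⟨?_, ?_, zElt_mem_degComponent k D α hd istar f T⟩
  · rw [canonical, zElt_eq_zCanon k D α istar hf hfirst hT']
  · rw [canonical]
    exact zCanon_mem_center k D α _

theorem stmt_4 {I : Type} [Fintype I] [DecidableEq I] (D : CartanDatum I)
    (hsymm : ∀ i j, D.c i j = D.c j i) (hd : ∀ i, D.d i = 1)
    (k : Type) [Field k] (α : I → ℕ) (istar : I) (hstar : 0 < α istar)
    (f : Fin (ht α) → I) (hf : InIalpha α f)
    (hfirst : ∀ r : Fin (ht α), f r = istar ↔ r.val < α istar)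
    (hblocks : ∀ r s t : Fin (ht α), r ≤ t → t ≤ s → f r = f s → f t = f r)
    (T T' : Finset (Equiv.Perm (Fin (ht α))))
    (hT : IsRepSystem f T) (hT' : IsRepSystem f T') :
    zElt k D α istar f T = zElt k D α istar f T' ∧
      zElt k D α istar f T ∈ Subalgebra.center k (H k D α) ∧
      zElt k D α istar f T ∈ degComponent k D α 2 :=
  stmt_4_general D hd k α istar f hf hfirst T T' hT hT'
end

section
/- Let α ∈ Q⁺ and let λ = (λ_1 ⪰ ⋯ ⪰ λ_l) and μ = (μ_1 ⪰ ⋯ ⪰ μ_m) be Kostant partitions of α. If there is a partition {1, …, l} = A_1 ⊔ ⋯ ⊔ A_m into disjoint nonempty subsets such that μ_b = Σ_{a ∈ A_b} λ_a for all b = 1, …, m, then λ ≥ μ in the bilexicographic order on KP(α). -/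
open scoped BigOperators

namespace KLR

variable {I : Type} [Fintype I] [DecidableEq I]

/-- The simple root `α_i`, as an integer vector in the root lattice. -/
def simple (i : I) : I → ℤ := fun j => if j = i then 1 else 0

/-- The simple reflection `s_i` acting on the root lattice:
`s_i(v) = v - (Σ_t c_{i,t} v_t) α_i`. -/
def srefl (D : CartanDatum I) (i : I) (v : I → ℤ) : I → ℤ :=
  fun j => v j - (if j = i then ∑ t, D.c i t * v t else 0)

/-- `v` is a root of the (finite type) root system with Cartan matrix `C`:
it lies in the Weyl group orbit of a simple root. -/
def IsRoot (D : CartanDatum I) (v : I → ℤ) : Prop :=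
  ∃ (L : List I) (i : I), v = L.foldr (srefl D) (simple i)

/-- `v` is a positive root: a root all of whose coordinates are nonnegative. -/
def IsPosRoot (D : CartanDatum I) (v : I → ℤ) : Prop :=
  IsRoot D v ∧ ∀ j, 0 ≤ v j

/-- `le` is a convex order on the set `Φ⁺` of positive roots: a total order such that
whenever `γ`, `β` and `γ + β` are all positive roots, `γ ⪯ β` implies
`γ ⪯ γ + β ⪯ β`. -/
structure IsConvexOrder (D : CartanDatum I) (le : (I → ℤ) → (I → ℤ) → Prop) : Prop where
  refl : ∀ v, IsPosRoot D v → le v v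
  trans : ∀ u v w, IsPosRoot D u → IsPosRoot D v → IsPosRoot D w →
      le u v → le v w → le u w
  antisymm : ∀ u v, IsPosRoot D u → IsPosRoot D v → le u v → le v u → u = v
  total : ∀ u v, IsPosRoot D u → IsPosRoot D v → le u v ∨ le v u
  convex : ∀ γ β, IsPosRoot D γ → IsPosRoot D β → IsPosRoot D (γ + β) → le γ β →
      le γ (γ + β) ∧ le (γ + β) β

/-- `L` is a Kostant partition of `α`: a weakly decreasing (for the convex order `le`)
list of positive roots summing to `α`. -/
def IsKP (D : CartanDatum I) (le : (I → ℤ) → (I → ℤ) → Prop) (α : I → ℕ)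
    (L : List (I → ℤ)) : Prop :=
  (∀ v ∈ L, IsPosRoot D v) ∧ List.Pairwise (fun a b => le b a) L ∧
    L.sum = fun i => (α i : ℤ)

/-- `L` is lexicographically smaller than `M` for the strict order `lt`:
they agree up to position `t`, where the entry of `L` is `lt`-smaller. -/
def LexLt {V : Type} (lt : V → V → Prop) (L M : List V) : Prop :=
  ∃ (t : ℕ) (h1 : t < L.length) (h2 : t < M.length),
    L.take t = M.take t ∧ lt (L.get ⟨t, h1⟩) (M.get ⟨t, h2⟩)

/-- The strict bilexicographic order on Kostant partitions: `L < M` iff `L` is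
lexicographically smaller than `M` and the reversed list `L.reverse` is lexicographically
bigger than `M.reverse`. -/
def BilexLt {V : Type} (le : V → V → Prop) (L M : List V) : Prop :=
  LexLt (fun a b => le a b ∧ a ≠ b) L M ∧
    LexLt (fun a b => le b a ∧ a ≠ b) L.reverse M.reverse

end KLR

open KLR

/-!
A positive root `β` that is a sum of at least two positive roots has a summand `γ` with `β - γ`
a root: `(β, β) > 0` forces `(β, γ) > 0` for some summand, and two distinct roots with positive
pairing differ by a root. By induction and convexity, every `μ_b = ∑_{a ∈ A_b} λ_a` therefore has
summands `λ_a ⪰ μ_b` and `λ_{a'} ⪯ μ_b`, chosen injectively in `b` since the `A_b` are disjoint.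
If `λ_t ≺ μ_t`, the chosen `λ_a ⪰ μ_b` for the `t + 1` indices `b ≤ t` would all have `a < t`;
hence `μ_t ⪯ λ_t` for every `t`, and dually `λ'_u ⪯ μ'_u`. Both lists sum to `α`, so neither
is a proper prefix of the other, and the first differing entries from either end give `μ < λ`.
-/

namespace KLR

lemma simple_eq_single {I : Type} [DecidableEq I] (i : I) : simple i = Pi.single i 1 := by
  funext j
  simp [simple, Pi.single_apply]

variable {I : Type} [Fintype I] [DecidableEq I] (D : CartanDatum I)

def coroot (i : I) : Module.Dual ℤ (I → ℤ) := (LinearMap.proj i).comp (Matrix.of D.c).mulVecLin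

lemma coroot_apply (i : I) (v : I → ℤ) : coroot D i v = ∑ t, D.c i t * v t := rfl

lemma coroot_simple (i : I) : coroot D i (simple i) = 2 := by
  simp [coroot_apply, simple_eq_single, Pi.single_apply, D.c_diag]

abbrev simpleReflection (i : I) : (I → ℤ) ≃ₗ[ℤ] (I → ℤ) := Module.reflection (coroot_simple D i)

lemma srefl_eq_simpleReflection (i : I) : srefl D i = simpleReflection D i := by
  funext v j
  by_cases h : j = i <;> simp [srefl, Module.reflection_apply, coroot_apply, simple, h]

def bform : LinearMap.BilinForm ℤ (I → ℤ) :=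
  Matrix.toLinearMap₂' ℤ (Matrix.of fun i j => D.d i * D.c i j)

lemma bform_apply (u v : I → ℤ) :
    bform D u v = ∑ i, ∑ j, u i * (D.d i * D.c i j) * v j := by
  simp only [bform, Matrix.toLinearMap₂'_apply, Matrix.of_apply, smul_eq_mul]
  exact Finset.sum_congr rfl fun i _ => Finset.sum_congr rfl fun j _ => by ring

lemma bform_comm (u v : I → ℤ) : bform D u v = bform D v u := by
  rw [bform_apply, bform_apply, Finset.sum_comm]
  exact Finset.sum_congr rfl fun j _ => Finset.sum_congr rfl fun i _ => by
    rw [D.symm]; ring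

lemma bform_simple_left (i : I) (v : I → ℤ) : bform D (simple i) v = D.d i * coroot D i v := by
  simp [bform_apply, coroot_apply, simple_eq_single, Pi.single_apply, Finset.mul_sum, mul_assoc]

lemma bform_self_pos {v : I → ℤ} (hv : v ≠ 0) : 0 < bform D v v := by
  have hq : (fun i => (v i : ℚ)) ≠ 0 := fun h =>
    hv (funext fun j => by simpa using congrFun h j)
  have := D.finiteType _ hq
  rw [bform_apply]
  exact_mod_cast this

lemma bform_simpleReflection (i : I) (u v : I → ℤ) :
    bform D (simpleReflection D i u) (simpleReflection D i v) = bform D u v := by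
  simp only [Module.reflection_apply, map_sub, map_smul, LinearMap.sub_apply,
    LinearMap.smul_apply, smul_eq_mul, bform_simple_left, coroot_simple]
  rw [bform_comm D u (simple i), bform_simple_left]
  ring

def weyl (L : List I) : (I → ℤ) ≃ₗ[ℤ] (I → ℤ) := (L.map (simpleReflection D)).prod

lemma weyl_apply (L : List I) (v : I → ℤ) : weyl D L v = L.foldr (srefl D) v := by
  induction L with
  | nil => rfl
  | cons i L ih => simp [weyl, ← ih, srefl_eq_simpleReflection]

lemma weyl_append (L M : List I) : weyl D (L ++ M) = weyl D L * weyl D M := by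
  simp [weyl]

lemma weyl_reverse (L : List I) : weyl D L.reverse = (weyl D L)⁻¹ := by
  simp [weyl, List.prod_inv_reverse, Module.reflection_inv, Function.comp_def]

lemma bform_weyl (L : List I) (u v : I → ℤ) : bform D (weyl D L u) (weyl D L v) = bform D u v := by
  induction L with
  | nil => rfl
  | cons i L ih => simp [weyl, bform_simpleReflection, ← ih]

lemma isRoot_iff {v : I → ℤ} : IsRoot D v ↔ ∃ (L : List I) (i : I), v = weyl D L (simple i) := by
  simp [IsRoot, weyl_apply]

lemma isRoot_weyl_apply (L : List I) {v : I → ℤ} (hv : IsRoot D v) : IsRoot D (weyl D L v) := by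
  obtain ⟨M, i, rfl⟩ := (isRoot_iff D).1 hv
  exact (isRoot_iff D).2 ⟨L ++ M, i, by rw [weyl_append]; rfl⟩

end KLR

namespace KLR

variable {I : Type} [Fintype I] [DecidableEq I] {D : CartanDatum I}

/-- For `β = w α_i`, take `p = ⟨α_i^∨, w⁻¹ ·⟩`: then `v - p v • β = w s_i w⁻¹ v`. -/
lemma IsRoot.exists_reflection {β : I → ℤ} (hβ : IsRoot D β) :
    ∃ (p : Module.Dual ℤ (I → ℤ)) (d : ℤ), 0 < d ∧ bform D β β = 2 * d ∧
      (∀ v, bform D β v = d * p v) ∧ ∀ v, IsRoot D v → IsRoot D (v - p v • β) := by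
  obtain ⟨L, i, rfl⟩ := (isRoot_iff D).1 hβ
  have hw (v : I → ℤ) : weyl D L (weyl D L.reverse v) = v := by simp [weyl_reverse]
  refine ⟨(coroot D i).comp (weyl D L.reverse).toLinearMap, D.d i, D.d_pos i, ?_, fun v => ?_,
    fun v hv => ?_⟩
  · rw [bform_weyl, bform_simple_left, coroot_simple, mul_comm]
  · conv_lhs => rw [← hw v]
    rw [bform_weyl, bform_simple_left]
    rfl
  · have hsi : simpleReflection D i = weyl D [i] := by simp [weyl]
    have : v - coroot D i (weyl D L.reverse v) • weyl D L (simple i)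
        = weyl D L (weyl D [i] (weyl D L.reverse v)) := by
      rw [← hsi, Module.reflection_apply, map_sub, map_smul, hw]
    change IsRoot D (v - coroot D i (weyl D L.reverse v) • _)
    rw [this]
    exact isRoot_weyl_apply D _ (isRoot_weyl_apply D _ (isRoot_weyl_apply D _ hv))

lemma IsRoot.ne_zero {v : I → ℤ} (hv : IsRoot D v) : v ≠ 0 := by
  obtain ⟨p, d, hd, hvv, -⟩ := hv.exists_reflection
  rintro rfl
  simp only [map_zero] at hvv
  omega

lemma IsRoot.neg {v : I → ℤ} (hv : IsRoot D v) : IsRoot D (-v) := by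
  obtain ⟨p, d, hd, hvv, hp, hrefl⟩ := hv.exists_reflection
  have : p v = 2 := by
    have := hp v
    rw [hvv] at this
    nlinarith
  simpa [this, two_smul] using hrefl v hv

/-- If `p = ⟨β^∨, α⟩` and `q = ⟨α^∨, β⟩` were both at least `2`, then `(α - β, α - β) ≤ 0`;
so one of them is `1` and the corresponding reflection sends `α` to `α - β` or `β` to `β - α`. -/
lemma IsRoot.sub_of_bform_pos {α β : I → ℤ} (hα : IsRoot D α) (hβ : IsRoot D β)
    (hpos : 0 < bform D α β) (hne : α ≠ β) : IsRoot D (α - β) := by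
  obtain ⟨p, d, hd, hββ, hp, hrefl_β⟩ := hβ.exists_reflection
  obtain ⟨q, e, he, hαα, hq, hrefl_α⟩ := hα.exists_reflection
  have hpα : bform D α β = d * p α := by rw [bform_comm]; exact hp α
  have hqβ : bform D α β = e * q β := hq β
  have hp_pos : 0 < p α := pos_of_mul_pos_right (hpα ▸ hpos) hd.le
  have hq_pos : 0 < q β := pos_of_mul_pos_right (hqβ ▸ hpos) he.le
  rcases (show p α = 1 ∨ q β = 1 ∨ (2 ≤ p α ∧ 2 ≤ q β) by omega) with h | h | ⟨hp2, hq2⟩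
  · simpa [h] using hrefl_β α hα
  · simpa [h] using (hrefl_α β hβ).neg
  · have : bform D (α - β) (α - β) ≤ 0 := by
      simp only [map_sub, LinearMap.sub_apply, bform_comm D β α]
      nlinarith
    exact absurd this (bform_self_pos D (sub_ne_zero.2 hne)).not_ge

lemma IsPosRoot.pos {v : I → ℤ} (hv : IsPosRoot D v) : 0 < v :=
  lt_of_le_of_ne hv.2 hv.1.ne_zero.symm

lemma IsRoot.exists_sub_root_of_eq_sum {β : I → ℤ} (hβ : IsRoot D β) {X : Type} {s : Finset X}
    {γ : X → I → ℤ} (hγ : ∀ a ∈ s, IsPosRoot D (γ a)) (hs : 1 < s.card)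
    (hsum : β = ∑ a ∈ s, γ a) : ∃ a ∈ s, IsRoot D (β - γ a) := by
  classical
  have : ∑ a ∈ s, (0 : ℤ) < ∑ a ∈ s, bform D β (γ a) := by
    rw [Finset.sum_const_zero, ← map_sum, ← hsum]
    exact bform_self_pos D hβ.ne_zero
  obtain ⟨a, ha, hpos⟩ := Finset.exists_lt_of_sum_lt this
  have hrest : β - γ a = ∑ b ∈ s.erase a, γ b := by
    rw [hsum, ← Finset.add_sum_erase s γ ha, add_sub_cancel_left]
  have hrest_pos : 0 < β - γ a := by
    rw [hrest]
    refine Finset.sum_pos (fun b hb => (hγ b (Finset.mem_of_mem_erase hb)).pos) ?_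
    rw [← Finset.card_pos, Finset.card_erase_of_mem ha]
    omega
  exact ⟨a, ha, hβ.sub_of_bform_pos (hγ a ha).1 hpos (sub_pos.1 hrest_pos).ne'⟩

variable {le : (I → ℤ) → (I → ℤ) → Prop}

lemma IsConvexOrder.dual (hconv : IsConvexOrder D le) : IsConvexOrder D (fun u v => le v u) where
  refl v hv := hconv.refl v hv
  trans u v w hu hv hw huv hvw := hconv.trans w v u hw hv hu hvw huv
  antisymm u v hu hv huv hvu := hconv.antisymm u v hu hv hvu huv
  total u v hu hv := (hconv.total u v hu hv).symm
  convex γ β hγ hβ hγβ h := by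
    rw [add_comm] at hγβ ⊢
    exact (hconv.convex β γ hβ hγ hγβ h).symm

/-- Peel off a summand `γ a` with `β - γ a` a root and apply convexity to
`β = γ a + (β - γ a)`. -/
lemma IsConvexOrder.exists_le_of_eq_sum (hconv : IsConvexOrder D le) {X : Type} {s : Finset X}
    (hs : s.Nonempty) {γ : X → I → ℤ} (hγ : ∀ a ∈ s, IsPosRoot D (γ a)) {β : I → ℤ}
    (hβ : IsPosRoot D β) (hsum : β = ∑ a ∈ s, γ a) : ∃ a ∈ s, le β (γ a) := by
  classical
  induction s using Finset.strongInduction generalizing β with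
  | H s ih =>
  obtain ⟨a, rfl⟩ | hs1 := Finset.Nonempty.exists_eq_singleton_or_nontrivial hs
  · simp only [Finset.sum_singleton] at hsum
    exact ⟨a, Finset.mem_singleton_self a, hsum ▸ hconv.refl β hβ⟩
  obtain ⟨a, ha, hδ_root⟩ :=
    hβ.1.exists_sub_root_of_eq_sum hγ (Finset.one_lt_card_iff_nontrivial.2 hs1) hsum
  have hrest : β - γ a = ∑ b ∈ s.erase a, γ b := by
    rw [hsum, ← Finset.add_sum_erase s γ ha, add_sub_cancel_left]
  have hγ_erase : ∀ b ∈ s.erase a, IsPosRoot D (γ b) :=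
    fun b hb => hγ b (Finset.mem_of_mem_erase hb)
  have hδ : IsPosRoot D (β - γ a) :=
    ⟨hδ_root, hrest ▸ Finset.sum_nonneg fun b hb => (hγ_erase b hb).pos.le⟩
  have hs_erase : (s.erase a).Nonempty := by
    rw [← Finset.card_pos, Finset.card_erase_of_mem ha]
    exact Nat.sub_pos_of_lt (Finset.one_lt_card_iff_nontrivial.2 hs1)
  have hγa := hγ a ha
  have hadd : γ a + (β - γ a) = β := add_sub_cancel _ _
  rcases hconv.total (γ a) (β - γ a) hγa hδ with h | h
  · have hβδ := (hconv.convex _ _ hγa hδ (by rwa [hadd]) h).2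
    rw [hadd] at hβδ
    obtain ⟨b, hb, hδb⟩ := ih _ (Finset.erase_ssubset ha) hs_erase hγ_erase hδ hrest
    exact ⟨b, Finset.mem_of_mem_erase hb, hconv.trans _ _ _ hβ hδ (hγ_erase b hb) hβδ hδb⟩
  · have hβγ := (hconv.convex _ _ hδ hγa (by rwa [add_comm, hadd]) h).2
    rw [add_comm, hadd] at hβγ
    exact ⟨a, ha, hβγ⟩

end KLR

theorem Fin.le_of_antitone_of_injective {β : Type*} [Preorder β] {m l : ℕ} {f : Fin m → β}
    {g : Fin l → β} (hf : Antitone f) (hg : Antitone g) {w : Fin m → Fin l}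
    (hw : Function.Injective w) (hfg : ∀ b, f b ≤ g (w b)) {t : ℕ} (hm : t < m) (hl : t < l) :
    f ⟨t, hm⟩ ≤ g ⟨t, hl⟩ := by
  by_contra h
  -- otherwise `w` would map the `t + 1` indices `b ≤ t` injectively below `t`
  have hlt (b : Fin (t + 1)) : (w (Fin.castLE hm b)).val < t := by
    by_contra! hge
    exact h ((hf (Fin.le_def.2 (Nat.le_of_lt_succ b.2))).trans ((hfg _).trans (hg hge)))
  have := Fintype.card_le_of_injective (fun b => (⟨_, hlt b⟩ : Fin t))
    fun b b' hbb => Fin.castLE_injective hm (hw (Fin.ext (Fin.mk.inj_iff.1 hbb)))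
  simp at this

theorem Fin.rev_le_of_antitone_of_injective {β : Type*} [Preorder β] {m l : ℕ} {f : Fin m → β}
    {g : Fin l → β} (hf : Antitone f) (hg : Antitone g) {w : Fin m → Fin l}
    (hw : Function.Injective w) (hgf : ∀ b, g (w b) ≤ f b) {t : ℕ} (hm : t < m) (hl : t < l) :
    g (Fin.rev ⟨t, hl⟩) ≤ f (Fin.rev ⟨t, hm⟩) := by
  have := @Fin.le_of_antitone_of_injective βᵒᵈ _ m l (OrderDual.toDual ∘ f ∘ Fin.rev)
    (OrderDual.toDual ∘ g ∘ Fin.rev) (hf.comp Fin.rev_anti).dual_right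
    (hg.comp Fin.rev_anti).dual_right (fun b => (w b.rev).rev)
    (Fin.rev_injective.comp (hw.comp Fin.rev_injective)) (fun b => by simpa using hgf b.rev) t hm hl
  exact this

theorem List.eq_of_prefix_of_sum_eq {M : Type*} [AddCommMonoid M] [PartialOrder M]
    [IsOrderedCancelAddMonoid M] {L L' : List M} (h : L <+: L') (hpos : ∀ x ∈ L', 0 < x)
    (hsum : L.sum = L'.sum) : L = L' := by
  obtain ⟨r, rfl⟩ := h
  rw [List.sum_append, left_eq_add] at hsum
  obtain rfl | hr := eq_or_ne r []
  · exact (List.append_nil L).symm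
  · exact absurd hsum (List.sum_pos r (fun x hx => hpos x (List.mem_append_right L hx)) hr).ne'

namespace KLR

theorem lexLt_of_getElem {V : Type} {r : V → V → Prop} {L M : List V} (hLM : ¬ L <+: M)
    (hML : ¬ M <+: L) (h : ∀ t (hL : t < L.length) (hM : t < M.length), L[t] ≠ M[t] → r L[t] M[t]) :
    LexLt r L M := by
  induction L generalizing M with
  | nil => exact absurd List.nil_prefix hLM
  | cons a L ih =>
    obtain _ | ⟨b, M⟩ := M
    · exact absurd List.nil_prefix hML
    by_cases hab : a = b
    · subst hab
      obtain ⟨t, h1, h2, htake, hr⟩ := ih (by simpa using hLM) (by simpa using hML)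
        fun t h1 h2 => h (t + 1) (by simpa using h1) (by simpa using h2)
      exact ⟨t + 1, by simpa using h1, by simpa using h2, by simpa using htake, by simpa using hr⟩
    · exact ⟨0, by simp, by simp, rfl, h 0 (by simp) (by simp) hab⟩

variable {I : Type} [Fintype I] [DecidableEq I] {D : CartanDatum I}
  {le : (I → ℤ) → (I → ℤ) → Prop}

lemma IsConvexOrder.exists_injective_le (hconv : IsConvexOrder D le) {ι κ : Type}
    {f : ι → I → ℤ} {g : κ → I → ℤ} (hf : ∀ b, IsPosRoot D (f b)) (hg : ∀ a, IsPosRoot D (g a))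
    {A : ι → Finset κ} (hA : ∀ b b', b ≠ b' → Disjoint (A b) (A b')) (hne : ∀ b, (A b).Nonempty)
    (hsum : ∀ b, f b = ∑ a ∈ A b, g a) :
    ∃ w : ι → κ, Function.Injective w ∧ ∀ b, le (f b) (g (w b)) := by
  choose w hwA hw using fun b =>
    hconv.exists_le_of_eq_sum (hne b) (fun a _ => hg a) (hf b) (hsum b)
  refine ⟨w, fun b b' hbb' => ?_, hw⟩
  by_contra hne'
  exact Finset.disjoint_left.1 (hA b b' hne') (hwA b) (hbb' ▸ hwA b')

abbrev IsConvexOrder.preorder (hconv : IsConvexOrder D le) : Preorder {v // IsPosRoot D v} where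
  le u v := le u v
  lt u v := le u v ∧ ¬ le v u
  lt_iff_le_not_ge _ _ := Iff.rfl
  le_refl v := hconv.refl v v.2
  le_trans u v w := hconv.trans u v w u.2 v.2 w.2

variable {α : I → ℕ} {L M : List (I → ℤ)}

lemma IsKP.isPosRoot_get (hL : IsKP D le α L) (a : Fin L.length) : IsPosRoot D (L.get a) :=
  hL.1 _ (L.get_mem a)

lemma IsKP.get_anti (hconv : IsConvexOrder D le) (hL : IsKP D le α L) {a b : Fin L.length}
    (hab : a ≤ b) : le (L.get b) (L.get a) := by
  obtain rfl | hab := hab.eq_or_lt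
  · exact hconv.refl _ (hL.isPosRoot_get a)
  · exact List.pairwise_iff_get.1 hL.2.1 a b hab

lemma IsKP.eq_of_prefix (hL : IsKP D le α L) (hM : IsKP D le α M) (h : L <+: M) : L = M :=
  List.eq_of_prefix_of_sum_eq h (fun v hv => (hM.1 v hv).pos) (hL.2.2.trans hM.2.2.symm)

lemma IsKP.reverse (hL : IsKP D le α L) : IsKP D (fun u v => le v u) α L.reverse :=
  ⟨fun v hv => hL.1 v (List.mem_reverse.1 hv), List.pairwise_reverse.2 hL.2.1,
    L.sum_reverse.trans hL.2.2⟩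

lemma IsKP.getElem_le_of_injective (hconv : IsConvexOrder D le) {α' : I → ℕ}
    (hL : IsKP D le α L) (hM : IsKP D le α' M) {w : Fin M.length → Fin L.length}
    (hw : Function.Injective w) (hle : ∀ b, le (M.get b) (L.get (w b))) {t : ℕ}
    (htM : t < M.length) (htL : t < L.length) : le M[t] L[t] := by
  let := hconv.preorder
  let f : Fin M.length → {v // IsPosRoot D v} := fun b => ⟨M.get b, hM.isPosRoot_get b⟩
  let g : Fin L.length → {v // IsPosRoot D v} := fun a => ⟨L.get a, hL.isPosRoot_get a⟩
  exact Fin.le_of_antitone_of_injective (f := f) (g := g) (fun _ _ h => hM.get_anti hconv h)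
    (fun _ _ h => hL.get_anti hconv h) hw hle htM htL

lemma IsKP.getElem_reverse_le_of_injective (hconv : IsConvexOrder D le) {α' : I → ℕ}
    (hL : IsKP D le α L) (hM : IsKP D le α' M) {w : Fin M.length → Fin L.length}
    (hw : Function.Injective w) (hge : ∀ b, le (L.get (w b)) (M.get b)) {t : ℕ}
    (htM : t < M.reverse.length) (htL : t < L.reverse.length) : le L.reverse[t] M.reverse[t] := by
  let := hconv.preorder
  let f : Fin M.length → {v // IsPosRoot D v} := fun b => ⟨M.get b, hM.isPosRoot_get b⟩
  let g : Fin L.length → {v // IsPosRoot D v} := fun a => ⟨L.get a, hL.isPosRoot_get a⟩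
  have := Fin.rev_le_of_antitone_of_injective (f := f) (g := g)
    (fun _ _ h => hM.get_anti hconv h) (fun _ _ h => hL.get_anti hconv h) hw hge
    (by simpa using htM) (by simpa using htL)
  simp only [Fin.rev, List.getElem_reverse, Nat.sub_sub, Nat.add_comm] at this ⊢
  exact this

end KLR

theorem stmt_8_general {I : Type} [Fintype I] [DecidableEq I] (D : CartanDatum I)
    (le : (I → ℤ) → (I → ℤ) → Prop) (hconv : IsConvexOrder D le)
    (α : I → ℕ) (lam mu : List (I → ℤ))
    (hlam : IsKP D le α lam) (hmu : IsKP D le α mu)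
    (A : Fin mu.length → Finset (Fin lam.length))
    (hdisj : ∀ b b', b ≠ b' → Disjoint (A b) (A b'))
    (hne : ∀ b, (A b).Nonempty)
    (hsum : ∀ b : Fin mu.length, mu.get b = ∑ a ∈ A b, lam.get a) :
    mu = lam ∨ BilexLt le mu lam := by
  obtain heq | hne_eq := eq_or_ne mu lam
  · exact .inl heq
  have hne_rev : mu.reverse ≠ lam.reverse := fun h => hne_eq (List.reverse_inj.1 h)
  obtain ⟨w, hw, hle⟩ := hconv.exists_injective_le hmu.isPosRoot_get hlam.isPosRoot_get
    hdisj hne hsum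
  obtain ⟨w', hw', hge⟩ := hconv.dual.exists_injective_le hmu.isPosRoot_get
    hlam.isPosRoot_get hdisj hne hsum
  refine .inr ⟨?_, ?_⟩
  · exact lexLt_of_getElem (hne_eq ∘ hmu.eq_of_prefix hlam) (hne_eq.symm ∘ hlam.eq_of_prefix hmu)
      fun t h1 h2 hne_t => ⟨hlam.getElem_le_of_injective hconv hmu hw hle h1 h2, hne_t⟩
  · exact lexLt_of_getElem (hne_rev ∘ hmu.reverse.eq_of_prefix hlam.reverse)
      (hne_rev.symm ∘ hlam.reverse.eq_of_prefix hmu.reverse)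
      fun t h1 h2 hne_t => ⟨hlam.getElem_reverse_le_of_injective hconv hmu hw' hge h1 h2, hne_t⟩

theorem stmt_8 {I : Type} [Fintype I] [DecidableEq I] (D : CartanDatum I)
    (le : (I → ℤ) → (I → ℤ) → Prop) (hconv : IsConvexOrder D le)
    (α : I → ℕ) (lam mu : List (I → ℤ))
    (hlam : IsKP D le α lam) (hmu : IsKP D le α mu)
    (A : Fin mu.length → Finset (Fin lam.length))
    (hdisj : ∀ b b', b ≠ b' → Disjoint (A b) (A b'))
    (hcover : ∀ a : Fin lam.length, ∃ b, a ∈ A b)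
    (hne : ∀ b, (A b).Nonempty)
    (hsum : ∀ b : Fin mu.length, mu.get b = ∑ a ∈ A b, lam.get a) :
    mu = lam ∨ BilexLt le mu lam :=
  stmt_8_general D le hconv α lam mu hlam hmu A hdisj hne hsum
end

section
/- Let k be a field, m and N positive integers, and M = ⊕_{d∈ℤ} M_d a ℤ-graded module over the polynomial ring k[x] graded with deg x = m (so x · M_d ⊆ M_{d+m}), such that dim_k M_d ≤ N for all d ∈ ℤ and M_d = 0 for all sufficiently small d. If multiplication by x is injective on M, then M is a free k[x]-module of finite rank. -/
/-!
Filter `M` by the tails `⨆ e ≥ d, M_e`. Multiplication by `X` maps the tail at `d` into the tail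
at `d + m`, so every polynomial preserves each tail. If `q • v = 0` with `q(0) ≠ 0`, then
`v = r • X • v` for some `r`, so `v` lies in every tail, and independence of the grading forces
`v = 0`; a general nonzero `p` is `X ^ a * q` with such a `q`, and `X` is injective. Hence `M` is
torsion-free.

Injectivity of `X : M_d → M_{d+m}` makes `d ↦ dim M_d` nondecreasing along steps of `m`. The
window sums `∑_{i<m} dim M_{d+i}` are then nondecreasing and bounded by `m N`, hence eventually
constant, and from that point on `X : M_d → M_{d+m}` is bijective. So `M` is generated over
`k[X]` by the finitely many nonzero `M_d` below that point, and a finitely generated torsion-free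
module over the PID `k[X]` is free.
-/

open Polynomial

lemma Monotone.exists_forall_ge_eq_of_le {S : ℤ → ℕ} (hS : Monotone S) {B : ℕ}
    (hB : ∀ d, S d ≤ B) : ∃ D, ∀ d ≥ D, S d = S D := by
  have hbdd : BddAbove (Set.range S) := ⟨B, Set.forall_mem_range.mpr hB⟩
  obtain ⟨D, hD⟩ := Nat.sSup_mem (Set.range_nonempty S) hbdd
  exact ⟨D, fun d hd ↦ le_antisymm (hD ▸ le_csSup hbdd ⟨d, rfl⟩) (hS hd)⟩

lemma exists_forall_ge_apply_add_eq {g : ℤ → ℕ} {m B : ℕ} (hg : ∀ d, g d ≤ g (d + m))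
    (hB : ∀ d, g d ≤ B) : ∃ D, ∀ d ≥ D, g (d + m) = g d := by
  set S : ℤ → ℕ := fun d ↦ ∑ i ∈ Finset.range m, g (d + i)
  have hS (d : ℤ) : S (d + 1) + g d = S d + g (d + m) :=
    calc S (d + 1) + g d = ∑ i ∈ Finset.range (m + 1), g (d + i) := by
          rw [Finset.sum_range_succ']
          congr 1
          · exact Finset.sum_congr rfl fun i _ ↦ by push_cast; ring_nf
          · simp
      _ = S d + g (d + m) := Finset.sum_range_succ _ _
  have hSmono : Monotone S := monotone_int_of_le_succ fun d ↦ by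
    have := hS d
    have := hg d
    omega
  have hSle (d : ℤ) : S d ≤ m * B := by
    simpa using Finset.sum_le_card_nsmul (Finset.range m) (fun i : ℕ ↦ g (d + i)) B
      fun i _ ↦ hB _
  obtain ⟨D, hD⟩ := hSmono.exists_forall_ge_eq_of_le hSle
  refine ⟨D, fun d hd ↦ ?_⟩
  have := hS d
  have := hD d hd
  have := hD (d + 1) (by omega)
  omega

namespace GradedPolynomialModule

section Tail

variable {k M : Type*} [Ring k] [AddCommGroup M] [Module k M] (ℳ : ℤ → Submodule k M)

def tail (d : ℤ) : Submodule k M := ⨆ e ∈ Set.Ici d, ℳ e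

variable {ℳ}

lemma le_tail {d e : ℤ} (h : d ≤ e) : ℳ e ≤ tail ℳ d :=
  le_biSup ℳ (Set.mem_Ici.mpr h)

lemma tail_antitone : Antitone (tail ℳ) := fun _ _ h ↦
  biSup_mono fun _ he ↦ h.trans he

lemma exists_mem_tail (hℳ : iSup ℳ = ⊤) (v : M) : ∃ d, v ∈ tail ℳ d := by
  have hv : v ∈ iSup ℳ := by simp [hℳ]
  obtain ⟨s, hs⟩ := Submodule.mem_iSup_iff_exists_finset.mp hv
  obtain ⟨d, hd⟩ := s.bddBelow
  refine ⟨d, ?_⟩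
  have : (⨆ e ∈ s, ℳ e) ≤ tail ℳ d := iSup₂_le fun e he ↦ le_tail (hd he)
  exact this hs

lemma eq_zero_of_forall_mem_tail (hℳ : iSupIndep ℳ) {v : M} (hv : ∀ d, v ∈ tail ℳ d) :
    v = 0 := by
  have hv' : v ∈ iSup ℳ := iSup₂_le (fun e _ ↦ le_iSup ℳ e) (hv 0)
  obtain ⟨s, hs⟩ := Submodule.mem_iSup_iff_exists_finset.mp hv'
  obtain ⟨d, hd⟩ := s.bddAbove
  have hdisj : Disjoint (s : Set ℤ) (Set.Ici (d + 1)) :=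
    Set.disjoint_left.mpr fun e he he' ↦ by
      have := hd he
      simp only [Set.mem_Ici] at he'
      omega
  exact Submodule.disjoint_def.mp (hℳ.disjoint_biSup_biSup hdisj) v hs (hv (d + 1))

end Tail

section PolynomialAction

variable {k M : Type*} [CommRing k] [AddCommGroup M] [Module k M] [Module k[X] M]
  [IsScalarTower k k[X] M] {ℳ : ℤ → Submodule k M} {m : ℕ}

lemma X_smul_mem_tail (hX : ∀ d, ∀ v ∈ ℳ d, (X : k[X]) • v ∈ ℳ (d + m)) {d : ℤ} {v : M}
    (hv : v ∈ tail ℳ d) : (X : k[X]) • v ∈ tail ℳ (d + m) := by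
  have : tail ℳ d ≤ (tail ℳ (d + m)).comap (DistribSMul.toLinearMap k M (X : k[X])) :=
    iSup₂_le fun e he ↦ fun v hv ↦ le_tail (by simp only [Set.mem_Ici] at he; omega) (hX e v hv)
  exact this hv

lemma smul_mem_tail (hX : ∀ d, ∀ v ∈ ℳ d, (X : k[X]) • v ∈ ℳ (d + m)) (p : k[X]) {d : ℤ}
    {v : M} (hv : v ∈ tail ℳ d) : p • v ∈ tail ℳ d := by
  induction p using Polynomial.induction_on with
  | C a => exact (algebraMap_smul k[X] a v) ▸ (tail ℳ d).smul_mem a hv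
  | add p q hp hq => exact add_smul p q v ▸ add_mem hp hq
  | monomial n a ih =>
    rw [pow_succ', mul_left_comm, mul_smul]
    exact tail_antitone (by omega) (X_smul_mem_tail hX ih)

end PolynomialAction

section TorsionFree

variable {k M : Type*} [Field k] [AddCommGroup M] [Module k M] [Module k[X] M]
  [IsScalarTower k k[X] M] {ℳ : ℤ → Submodule k M} {m : ℕ}

lemma eq_zero_of_smul_eq_zero_of_coeff_zero_ne_zero (hℳ : DirectSum.IsInternal ℳ)
    (hX : ∀ d, ∀ v ∈ ℳ d, (X : k[X]) • v ∈ ℳ (d + m)) (hm : 0 < m) {q : k[X]}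
    (hq : q.coeff 0 ≠ 0) {v : M} (hqv : q • v = 0) : v = 0 := by
  set c := q.coeff 0
  set r : k[X] := -(C c⁻¹ * q.divX)
  have hfix : v = r • (X : k[X]) • v := by
    have hc : C c⁻¹ * C c = 1 := by rw [← C_mul, inv_mul_cancel₀ hq, C_1]
    have hr : r * X = 1 - C c⁻¹ * q := by
      linear_combination (-C c⁻¹) * X_mul_divX_add q + hc
    rw [← mul_smul, hr, sub_smul, one_smul, mul_smul, hqv, smul_zero, sub_zero]
  obtain ⟨d, hd⟩ := exists_mem_tail hℳ.submodule_iSup_eq_top v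
  have hshift (n : ℕ) : v ∈ tail ℳ (d + n * m) := by
    induction n with
    | zero => simpa using hd
    | succ n ih =>
      rw [hfix]
      refine smul_mem_tail hX r ?_
      convert X_smul_mem_tail hX ih using 2
      push_cast
      ring
  refine eq_zero_of_forall_mem_tail hℳ.submodule_iSupIndep fun e ↦
    tail_antitone ?_ (hshift (e - d).toNat)
  have : e - d ≤ (e - d).toNat := Int.self_le_toNat _
  have : ((e - d).toNat : ℤ) ≤ (e - d).toNat * m :=
    le_mul_of_one_le_right (by positivity) (by exact_mod_cast hm)
  omega

lemma isTorsionFree (hℳ : DirectSum.IsInternal ℳ)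
    (hX : ∀ d, ∀ v ∈ ℳ d, (X : k[X]) • v ∈ ℳ (d + m)) (hm : 0 < m)
    (hinj : Function.Injective ((X : k[X]) • · : M → M)) : Module.IsTorsionFree k[X] M := by
  refine .of_smul_eq_zero fun p v hpv ↦ or_iff_not_imp_left.mpr fun hp ↦ ?_
  obtain ⟨q, hpq, hq⟩ := p.exists_eq_pow_rootMultiplicity_mul_and_not_dvd hp 0
  rw [C_0, sub_zero, X_dvd_iff] at hq
  rw [hpq, C_0, sub_zero, mul_comm, mul_smul] at hpv
  have hinj' : Function.Injective ((X ^ p.rootMultiplicity 0 : k[X]) • · : M → M) :=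
    smul_iterate (α := M) (X : k[X]) _ ▸ hinj.iterate _
  exact hinj' ((eq_zero_of_smul_eq_zero_of_coeff_zero_ne_zero hℳ hX hm hq hpv).trans
    (smul_zero _).symm)

end TorsionFree

section Finiteness

variable {k M : Type*} [Field k] [AddCommGroup M] [Module k M] [Module k[X] M]
  [IsScalarTower k k[X] M] {ℳ : ℤ → Submodule k M} {m : ℕ}

noncomputable def mulX (hX : ∀ d, ∀ v ∈ ℳ d, (X : k[X]) • v ∈ ℳ (d + m)) (d : ℤ) :
    ℳ d →ₗ[k] ℳ (d + m) :=
  (DistribSMul.toLinearMap k M (X : k[X])).restrict (hX d)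

lemma mulX_injective (hX : ∀ d, ∀ v ∈ ℳ d, (X : k[X]) • v ∈ ℳ (d + m))
    (hinj : Function.Injective ((X : k[X]) • · : M → M)) (d : ℤ) :
    Function.Injective (mulX hX d) :=
  fun _ _ h ↦ Subtype.ext (hinj (congrArg Subtype.val h))

lemma exists_forall_ge_X_smul_surjective [∀ d, FiniteDimensional k (ℳ d)] {N : ℕ}
    (hX : ∀ d, ∀ v ∈ ℳ d, (X : k[X]) • v ∈ ℳ (d + m))
    (hinj : Function.Injective ((X : k[X]) • · : M → M))
    (hN : ∀ d, Module.finrank k (ℳ d) ≤ N) :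
    ∃ D, ∀ d ≥ D, ∀ u ∈ ℳ (d + m), ∃ v ∈ ℳ d, (X : k[X]) • v = u := by
  obtain ⟨D, hD⟩ := exists_forall_ge_apply_add_eq
    (fun d ↦ LinearMap.finrank_le_finrank_of_injective (mulX_injective hX hinj d)) hN
  refine ⟨D, fun d hd u hu ↦ ?_⟩
  obtain ⟨v, hv⟩ := (LinearMap.injective_iff_surjective_of_finrank_eq_finrank (hD d hd).symm).mp
    (mulX_injective hX hinj d) ⟨u, hu⟩
  exact ⟨v, v.2, congrArg Subtype.val hv⟩

lemma le_span_of_forall_lt_eq_bot (hm : 0 < m) {D D' : ℤ} (hD : ∀ d < D, ℳ d = ⊥)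
    (hD' : ∀ d ≥ D', ∀ u ∈ ℳ (d + m), ∃ v ∈ ℳ d, (X : k[X]) • v = u) (d : ℤ) :
    ℳ d ≤ (Submodule.span k[X]
      (((Finset.Ico D (D' + m)).sup ℳ : Submodule k M) : Set M)).restrictScalars k := by
  induction d using Int.strongRec (m := D' + m) with
  | lt d hd =>
    by_cases hdD : d < D
    · simp [hD d hdD]
    · have hmem : d ∈ Finset.Ico D (D' + m) := Finset.mem_Ico.mpr ⟨by omega, hd⟩
      exact fun u hu ↦ Submodule.subset_span (Finset.le_sup (f := ℳ) hmem hu)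
  | ge d hd ih =>
    intro u hu
    obtain ⟨v, hv, rfl⟩ := hD' (d - m) (by omega) u (by rwa [sub_add_cancel])
    exact Submodule.smul_mem (Submodule.span k[X] _) _ (ih (d - m) (by omega) hv)

lemma finite [∀ d, FiniteDimensional k (ℳ d)] {N : ℕ} (hℳ : iSup ℳ = ⊤)
    (hX : ∀ d, ∀ v ∈ ℳ d, (X : k[X]) • v ∈ ℳ (d + m)) (hm : 0 < m)
    (hinj : Function.Injective ((X : k[X]) • · : M → M))
    (hN : ∀ d, Module.finrank k (ℳ d) ≤ N) {D : ℤ} (hD : ∀ d < D, ℳ d = ⊥) :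
    Module.Finite k[X] M := by
  obtain ⟨D', hD'⟩ := exists_forall_ge_X_smul_surjective hX hinj hN
  set W := (Finset.Ico D (D' + m)).sup ℳ
  have hspan : Submodule.span k[X] (W : Set M) = ⊤ := by
    have : iSup ℳ ≤ (Submodule.span k[X] (W : Set M)).restrictScalars k :=
      iSup_le (le_span_of_forall_lt_eq_bot hm hD hD')
    exact eq_top_iff.mpr fun u _ ↦ this (by rw [hℳ]; exact Submodule.mem_top)
  obtain ⟨t, ht⟩ : W.FG := Module.Finite.iff_fg.mp inferInstance
  exact ⟨⟨t, by rw [← Submodule.span_span_of_tower k, ht, hspan]⟩⟩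

end Finiteness

end GradedPolynomialModule

theorem stmt_10_general (k : Type) [Field k] (m N : ℕ) (hm : 0 < m)
    (M : Type) [AddCommGroup M] [Module (Polynomial k) M]
    [Module k M] [IsScalarTower k (Polynomial k) M]
    (ℳ : ℤ → Submodule k M)
    (hinternal : DirectSum.IsInternal ℳ)
    (hgrading : ∀ (d : ℤ), ∀ v ∈ ℳ d, (Polynomial.X : Polynomial k) • v ∈ ℳ (d + m))
    (hdim : ∀ d : ℤ, Module.rank k (ℳ d) ≤ N)
    (hvanish : ∃ D : ℤ, ∀ d < D, ℳ d = ⊥)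
    (hinj : Function.Injective (fun v : M => (Polynomial.X : Polynomial k) • v)) :
    Module.Free (Polynomial k) M ∧ Module.Finite (Polynomial k) M := by
  obtain ⟨D, hD⟩ := hvanish
  have hfd (d : ℤ) : FiniteDimensional k (ℳ d) :=
    Module.rank_lt_aleph0_iff.mp ((hdim d).trans_lt (Cardinal.natCast_lt_aleph0))
  have hfin := GradedPolynomialModule.finite hinternal.submodule_iSup_eq_top hgrading hm hinj
    (fun d ↦ Module.finrank_le_of_rank_le (hdim d)) hD
  have htf := GradedPolynomialModule.isTorsionFree hinternal hgrading hm hinj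
  exact ⟨inferInstance, hfin⟩

theorem stmt_10 (k : Type) [Field k] (m N : ℕ) (hm : 0 < m) (hN : 0 < N)
    (M : Type) [AddCommGroup M] [Module (Polynomial k) M]
    [Module k M] [IsScalarTower k (Polynomial k) M]
    (ℳ : ℤ → Submodule k M)
    (hinternal : DirectSum.IsInternal ℳ)
    (hgrading : ∀ (d : ℤ), ∀ v ∈ ℳ d, (Polynomial.X : Polynomial k) • v ∈ ℳ (d + m))
    (hdim : ∀ d : ℤ, Module.rank k (ℳ d) ≤ N)
    (hvanish : ∃ D : ℤ, ∀ d < D, ℳ d = ⊥)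
    (hinj : Function.Injective (fun v : M => (Polynomial.X : Polynomial k) • v)) :
    Module.Free (Polynomial k) M ∧ Module.Finite (Polynomial k) M :=
  stmt_10_general k m N hm M ℳ hinternal hgrading hdim hvanish hinj
end

section
/- Let k be a field, N a positive integer, and V = ⊕_{d∈ℤ} V_d a ℤ-graded k-vector space with dim_k V_d ≤ N for all d ∈ ℤ and V_d = 0 for all sufficiently small d. Let x, y : V → V be commuting k-linear maps that are homogeneous of positive degrees m_1 and m_2 respectively (x(V_d) ⊆ V_{d+m_1} and y(V_d) ⊆ V_{d+m_2} for all d, with m_1, m_2 > 0). Then for every v ∈ V there exists a nonzero polynomial f ∈ k[X,Y] in two commuting variables such that f(x,y)(v) = 0. -/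
/-!
Choose `a, b > 0` with `a m₁ = b m₂`. Then all monomials `x ^ (a i) * y ^ (b j)` with `i + j = n`
shift degrees by the same amount `n a m₁`. If the components of `v` lie in degrees from a finite
set `s`, these `n + 1` vectors lie in `⨁_{d ∈ s} V_{d + n a m₁}`, which has dimension at most
`|s| N`; for `n = |s| N` they are linearly dependent, and a linear dependence among the vectors
`x ^ p * y ^ q v` is a nonzero polynomial annihilating `v`.
-/

universe u v

open MvPolynomial Cardinal

def Module.End.IsHomogeneous {k V ι : Type*} [Semiring k] [AddCommMonoid V] [Module k V] [Add ι]
    (𝒱 : ι → Submodule k V) (m : ι) (f : Module.End k V) : Prop :=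
  ∀ d, ∀ v ∈ 𝒱 d, f v ∈ 𝒱 (d + m)

namespace Module.End.IsHomogeneous

variable {k V ι : Type*} [Semiring k] [AddCommMonoid V] [Module k V] [AddMonoid ι]
  {𝒱 : ι → Submodule k V} {f g : Module.End k V} {m m' : ι}

theorem mul (hf : IsHomogeneous 𝒱 m f) (hg : IsHomogeneous 𝒱 m' g) :
    IsHomogeneous 𝒱 (m' + m) (f * g) := fun d v hv => by
  rw [Module.End.mul_apply, ← add_assoc]
  exact hf _ _ (hg d v hv)

theorem pow (hf : IsHomogeneous 𝒱 m f) : ∀ n : ℕ, IsHomogeneous 𝒱 (n • m) (f ^ n)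
  | 0 => fun d v hv => by simpa using hv
  | n + 1 => by
    rw [pow_succ', succ_nsmul]
    exact hf.mul (hf.pow n)

theorem apply_mem_biSup (hf : IsHomogeneous 𝒱 m f) {s : Finset ι} {v : V}
    (hv : v ∈ ⨆ d ∈ s, 𝒱 d) : f v ∈ ⨆ d ∈ s, 𝒱 (d + m) := by
  have : (⨆ d ∈ s, 𝒱 d) ≤ (⨆ d ∈ s, 𝒱 (d + m)).comap f :=
    iSup₂_le fun d hd u hu => le_biSup (fun d => 𝒱 (d + m)) hd (hf d u hu)
  exact this hv

end Module.End.IsHomogeneous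

theorem Submodule.rank_biSup_le_card_mul {k V ι : Type*} [DivisionRing k] [AddCommGroup V]
    [Module k V] (𝒱 : ι → Submodule k V) {N : Cardinal} (hdim : ∀ d, Module.rank k (𝒱 d) ≤ N)
    (s : Finset ι) : Module.rank k ↥(⨆ d ∈ s, 𝒱 d) ≤ s.card * N := by
  classical
  induction s using Finset.induction_on with
  | empty => simp
  | insert d s hd ih =>
    rw [Finset.iSup_insert, Finset.card_insert_of_notMem hd, Nat.cast_succ, add_one_mul, add_comm]
    exact (rank_add_le_rank_add_rank _ _).trans (add_le_add (hdim d) ih)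

theorem MvPolynomial.exists_ne_zero_sum_smul_eq_zero {k V σ : Type*} [CommRing k]
    [AddCommGroup V] [Module k V] {g : (σ →₀ ℕ) → V} (hg : ¬ LinearIndependent k g) :
    ∃ f : MvPolynomial σ k, f ≠ 0 ∧ ∑ μ ∈ f.support, coeff μ f • g μ = 0 := by
  obtain ⟨f, hf, hne⟩ := not_linearIndependent_iff_finsupp.mp hg
  exact ⟨AddMonoidAlgebra.ofCoeff f, fun h => hne (congrArg AddMonoidAlgebra.coeff h), hf⟩

theorem LinearIndependent.cardinal_lift_le_rank_of_forall_mem {k : Type*} {V : Type u}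
    {J : Type v} [Ring k] [Nontrivial k] [AddCommGroup V] [Module k V] {w : J → V}
    (hw : LinearIndependent k w) {W : Submodule k V} (hW : ∀ j, w j ∈ W) :
    lift.{u} #J ≤ lift.{v} (Module.rank k W) := by
  have hw' : LinearIndependent k (fun j => (⟨w j, hW j⟩ : W)) := .of_comp W.subtype hw
  exact hw'.cardinal_lift_le_rank

open Finset.HasAntidiagonal in
theorem Module.End.not_linearIndependent_monomial_apply {k V ι : Type*} [Field k]
    [AddCommGroup V] [Module k V] [AddCommMonoid ι] (𝒱 : ι → Submodule k V)
    (hspan : ⨆ d, 𝒱 d = ⊤) {N : ℕ} (hdim : ∀ d, Module.rank k (𝒱 d) ≤ N)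
    {x y : Module.End k V} {m₁ m₂ : ι} (hx : IsHomogeneous 𝒱 m₁ x) (hy : IsHomogeneous 𝒱 m₂ y)
    {a b : ℕ} (ha : a ≠ 0) (hb : b ≠ 0) (hab : a • m₁ = b • m₂) (v : V) :
    ¬ LinearIndependent k (fun μ : Fin 2 →₀ ℕ => (x ^ μ 0 * y ^ μ 1) v) := by
  intro hli
  have hv : v ∈ ⨆ d, 𝒱 d := hspan ▸ Submodule.mem_top
  obtain ⟨s, hv⟩ := Submodule.mem_iSup_iff_exists_finset.mp hv
  set n := s.card * N
  let monomial (p : antidiagonal n) : Fin 2 →₀ ℕ :=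
    Finsupp.single 0 (a * p.1.1) + Finsupp.single 1 (b * p.1.2)
  have monomial_apply (p) : monomial p 0 = a * p.1.1 ∧ monomial p 1 = b * p.1.2 := by
    simp [monomial]
  have monomial_injective : Function.Injective monomial := by
    intro p q hpq
    have h0 := congrArg (· 0) hpq
    have h1 := congrArg (· 1) hpq
    simp only [monomial_apply] at h0 h1
    exact Subtype.ext (Prod.ext (Nat.eq_of_mul_eq_mul_left (Nat.pos_of_ne_zero ha) h0)
      (Nat.eq_of_mul_eq_mul_left (Nat.pos_of_ne_zero hb) h1))
  have mem_window (p : antidiagonal n) :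
      (x ^ monomial p 0 * y ^ monomial p 1) v ∈ ⨆ d ∈ s, 𝒱 (d + n • a • m₁) := by
    have hdeg : (b * p.1.2) • m₂ + (a * p.1.1) • m₁ = n • a • m₁ := by
      rw [mul_nsmul, mul_nsmul, ← hab, ← add_nsmul, add_comm, mem_antidiagonal.mp p.2]
    rw [(monomial_apply p).1, (monomial_apply p).2, ← hdeg]
    exact ((hx.pow _).mul (hy.pow _)).apply_mem_biSup hv
  have hli' : LinearIndependent k (fun p => (x ^ monomial p 0 * y ^ monomial p 1) v) :=
    hli.comp monomial monomial_injective
  have hcard := hli'.cardinal_lift_le_rank_of_forall_mem mem_window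
  have hrank : Module.rank k ↥(⨆ d ∈ s, 𝒱 (d + n • a • m₁)) ≤ n := by
    simpa only [n, Nat.cast_mul] using Submodule.rank_biSup_le_card_mul _ (fun d => hdim _) s
  simp only [mk_coe_finset, Finset.Nat.card_antidiagonal, lift_natCast] at hcard
  exact absurd (hcard.trans (lift_le.mpr hrank)) (by simp)

theorem stmt_11_general (k : Type) [Field k] (N : ℕ)
    (V : Type) [AddCommGroup V] [Module k V]
    (𝒱 : ℤ → Submodule k V)
    (hinternal : DirectSum.IsInternal 𝒱)
    (hdim : ∀ d : ℤ, Module.rank k (𝒱 d) ≤ N)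
    (x y : Module.End k V)
    (m₁ m₂ : ℤ) (hm₁ : 0 < m₁) (hm₂ : 0 < m₂)
    (hx : ∀ (d : ℤ), ∀ v ∈ 𝒱 d, x v ∈ 𝒱 (d + m₁))
    (hy : ∀ (d : ℤ), ∀ v ∈ 𝒱 d, y v ∈ 𝒱 (d + m₂))
    (v : V) :
    ∃ f : MvPolynomial (Fin 2) k, f ≠ 0 ∧
      (f.support.sum fun μ => MvPolynomial.coeff μ f • (x ^ (μ 0) * y ^ (μ 1))) v = 0 := by
  lift m₁ to ℕ using hm₁.le
  lift m₂ to ℕ using hm₂.le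
  have hdep := Module.End.not_linearIndependent_monomial_apply 𝒱 hinternal.submodule_iSup_eq_top
    hdim hx hy (a := m₂) (b := m₁) (by omega) (by omega) (by simp [mul_comm]) v
  obtain ⟨f, hf, hfv⟩ := MvPolynomial.exists_ne_zero_sum_smul_eq_zero hdep
  refine ⟨f, hf, ?_⟩
  simpa only [LinearMap.coe_sum, Finset.sum_apply, LinearMap.smul_apply] using hfv

theorem stmt_11 (k : Type) [Field k] (N : ℕ) (hN : 0 < N)
    (V : Type) [AddCommGroup V] [Module k V]
    (𝒱 : ℤ → Submodule k V)
    (hinternal : DirectSum.IsInternal 𝒱)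
    (hdim : ∀ d : ℤ, Module.rank k (𝒱 d) ≤ N)
    (hvanish : ∃ D : ℤ, ∀ d < D, 𝒱 d = ⊥)
    (x y : Module.End k V) (hcomm : x * y = y * x)
    (m₁ m₂ : ℤ) (hm₁ : 0 < m₁) (hm₂ : 0 < m₂)
    (hx : ∀ (d : ℤ), ∀ v ∈ 𝒱 d, x v ∈ 𝒱 (d + m₁))
    (hy : ∀ (d : ℤ), ∀ v ∈ 𝒱 d, y v ∈ 𝒱 (d + m₂))
    (v : V) :
    ∃ f : MvPolynomial (Fin 2) k, f ≠ 0 ∧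
      (f.support.sum fun μ => MvPolynomial.coeff μ f • (x ^ (μ 0) * y ^ (μ 1))) v = 0 :=
  stmt_11_general k N V 𝒱 hinternal hdim x y m₁ m₂ hm₁ hm₂ hx hy v
end
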